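/- Let λ ∈ P⁺ (so J_λ = 𝓘) and let V be a highest weight 𝔤-module with highest weight λ such that J_V^c ≠ ∅, say |J_V^c| = n. Fix nonnegative integers c(i) for i ∈ J_V^c, and let i_1, …, i_n be any enumeration of J_V^c with the property that for every 1 ≤ t ≤ n, either the set {i_t, i_{t+1}, …, i_n} is independent, or there exists r > t with ⟨α_{i_t}, α_{i_r}^∨⟩ ≠ 0 and c(i_r) ≥ c(i_t). Then f_{i_1}^{c(i_1)} ⋯ f_{i_n}^{c(i_n)} · v_λ ≠ 0 in V; in particular f_{i_1}^{c(i_1)} ⋯ f_{i_n}^{c(i_n)} · V_λ ≠ 0. -/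

import Mathlib

open scoped BigOperators

attribute [local instance] Classical.propDecidable

namespace KM

/-- The set of `ℤ≥0`-linear combinations of elements of `S`. -/
def cone {W : Type} [AddCommMonoid W] (S : Set W) : Set W :=
  (AddSubmonoid.closure S : AddSubmonoid W)

/-- Minkowski difference of two sets. -/
def mdiff {W : Type} [Sub W] (A B : Set W) : Set W :=
  {x | ∃ a ∈ A, ∃ b ∈ B, x = a - b}

variable {g : Type} [LieRing g] [LieAlgebra ℂ g]

/-- The `μ`-weight space of a `g`-module `V` with respect to a Cartan subalgebra `H`. -/
def wtSpace (H : LieSubalgebra ℂ g) (V : Type) [AddCommGroup V] [Module ℂ V]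
    [LieRingModule g V] [LieModule ℂ g V] (μ : Module.Dual ℂ H) : Submodule ℂ V where
  carrier := {w | ∀ h : H, ⁅(h : g), w⁆ = μ h • w}
  add_mem' := by
    intro a b ha hb h
    rw [lie_add, ha h, hb h, smul_add]
  zero_mem' := by
    intro h
    rw [lie_zero, smul_zero]
  smul_mem' := by
    intro t w hw h
    rw [lie_smul, hw h, smul_smul, smul_smul, mul_comm]

/-- The set of weights of a `g`-module `V`. -/
def wtSet (H : LieSubalgebra ℂ g) (V : Type) [AddCommGroup V] [Module ℂ V]
    [LieRingModule g V] [LieModule ℂ g V] : Set (Module.Dual ℂ H) :=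
  {μ | wtSpace H V μ ≠ ⊥}

/-- Iterated action `x^n · w` of an element `x : g` on a module vector. -/
def actPow {V : Type} [AddCommGroup V] [LieRingModule g V] (x : g) (n : ℕ) (w : V) : V :=
  (fun u => ⁅x, u⁆)^[n] w

/-- The data of a Kac--Moody Lie algebra `g` attached to a generalized Cartan matrix `A`,
with Cartan subalgebra `H`, simple roots `α`, simple coroots `coroot`, and Chevalley
generators `e`, `f`. -/
structure Data (𝓘 : Type) (g : Type) [LieRing g] [LieAlgebra ℂ g] where
  H : LieSubalgebra ℂ g
  α : 𝓘 → Module.Dual ℂ H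
  coroot : 𝓘 → H
  e : 𝓘 → g
  f : 𝓘 → g
  A : 𝓘 → 𝓘 → ℤ
  pairing_eq : ∀ i j, α i (coroot j) = (A j i : ℂ)
  A_diag : ∀ i, A i i = 2
  A_offdiag : ∀ i j, i ≠ j → A i j ≤ 0
  A_zero_iff : ∀ i j, A i j = 0 ↔ A j i = 0
  indepSimple : LinearIndependent ℂ α
  cartan_abelian : ∀ h h' : H, ⁅(h : g), (h' : g)⁆ = 0
  lie_h_e : ∀ (h : H) (i : 𝓘), ⁅(h : g), e i⁆ = α i h • e i
  lie_h_f : ∀ (h : H) (i : 𝓘), ⁅(h : g), f i⁆ = -(α i h) • f i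
  lie_e_f_same : ∀ i, ⁅e i, f i⁆ = (coroot i : g)
  lie_e_f_ne : ∀ i j, i ≠ j → ⁅e i, f j⁆ = 0
  serre_e : ∀ i j, i ≠ j → ((LieAlgebra.ad ℂ g (e i)) ^ (1 - A i j).toNat) (e j) = 0
  serre_f : ∀ i j, i ≠ j → ((LieAlgebra.ad ℂ g (f i)) ^ (1 - A i j).toNat) (f j) = 0
  generates : LieSubalgebra.lieSpan ℂ g ((H : Set g) ∪ Set.range e ∪ Set.range f) = ⊤
  rootDecomp : (⨆ μ : Module.Dual ℂ H, wtSpace H g μ) = ⊤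
  zeroWtSpace : wtSpace H g (0 : Module.Dual ℂ H) = H.toSubmodule
  root_pm : ∀ μ : Module.Dual ℂ H, μ ≠ 0 → wtSpace H g μ ≠ ⊥ →
      μ ∈ cone (Set.range α) ∨ -μ ∈ cone (Set.range α)

variable {𝓘 : Type}

/-- `V` is a highest weight `g`-module with highest weight `lam` and highest weight
vector `v`; equivalently, `V` is a nonzero quotient of the Verma module `M(lam)`. -/
def IsHW (D : Data 𝓘 g) (V : Type) [AddCommGroup V] [Module ℂ V] [LieRingModule g V]
    [LieModule ℂ g V] (lam : Module.Dual ℂ D.H) (v : V) : Prop :=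
  v ≠ 0 ∧ v ∈ wtSpace D.H V lam ∧ (∀ i : 𝓘, ⁅D.e i, v⁆ = 0) ∧
    LieSubmodule.lieSpan ℂ g {v} = ⊤

/-- `J_λ`, the set of integrable directions of `lam`. -/
def Jlam (D : Data 𝓘 g) (lam : Module.Dual ℂ D.H) : Set 𝓘 :=
  {i | ∃ n : ℕ, lam (D.coroot i) = (n : ℂ)}

/-- `Π_J`, the simple roots indexed by `J`. -/
def PiJ (D : Data 𝓘 g) (J : Set 𝓘) : Set (Module.Dual ℂ D.H) := D.α '' J

/-- The root system `Δ` of `g`. -/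
def roots (D : Data 𝓘 g) : Set (Module.Dual ℂ D.H) :=
  {μ | μ ≠ 0 ∧ wtSpace D.H g μ ≠ ⊥}

/-- The positive roots `Δ⁺`. -/
def posRoots (D : Data 𝓘 g) : Set (Module.Dual ℂ D.H) :=
  roots D ∩ cone (Set.range D.α)

/-- The positive roots `Δ⁺_J` of the parabolic subroot system `Δ_J = Δ ∩ ℤΠ_J`. -/
def posRootsJ (D : Data 𝓘 g) (J : Set 𝓘) : Set (Module.Dual ℂ D.H) :=
  posRoots D ∩ (Submodule.span ℤ (D.α '' J) : Set (Module.Dual ℂ D.H))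

/-- `wt_J V := wt V ∩ (λ − ℤ≥0 Π_J)`. -/
def wtJ (D : Data 𝓘 g) (V : Type) [AddCommGroup V] [Module ℂ V] [LieRingModule g V]
    [LieModule ℂ g V] (lam : Module.Dual ℂ D.H) (J : Set 𝓘) : Set (Module.Dual ℂ D.H) :=
  wtSet D.H V ∩ {μ | ∃ x ∈ cone (PiJ D J), μ = lam - x}

/-- A subset `S` of nodes is independent if its induced Dynkin subdiagram has no edges. -/
def IndepSet (D : Data 𝓘 g) (S : Set 𝓘) : Prop :=
  ∀ i ∈ S, ∀ j ∈ S, i ≠ j → D.α i (D.coroot j) = 0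

/-- `J_V`: the union of all minimal independent subsets `I ⊆ J_λ` with
`λ − Σ_{i∈I} (λ(α_i^∨)+1)α_i ∉ wt V`. -/
def JV (D : Data 𝓘 g) (V : Type) [AddCommGroup V] [Module ℂ V] [LieRingModule g V]
    [LieModule ℂ g V] (lam : Module.Dual ℂ D.H) : Set 𝓘 :=
  {i | ∃ I : Finset 𝓘, (↑I : Set 𝓘) ⊆ Jlam D lam ∧ IndepSet D (↑I : Set 𝓘) ∧
    (lam - ∑ k ∈ I, (lam (D.coroot k) + 1) • D.α k) ∉ wtSet D.H V ∧
    (∀ K : Finset 𝓘, K ⊂ I →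
      (lam - ∑ k ∈ K, (lam (D.coroot k) + 1) • D.α k) ∈ wtSet D.H V) ∧
    i ∈ I}
/-!
Induct on the enumeration from the inside out. If `{i_t, …, i_n}` is independent, the `f_i` for `i`
in it commute, and the monomial is `∏ f_k^{d_k} v` over an independent subset of `J_V^c`. In each
direction `k` the rest of the monomial is `e_k`-singular of `α_k^∨`-weight `λ(α_k^∨)`, so
`sl₂`-theory lowers every exponent to `0` or `λ(α_k^∨) + 1` without reaching `0`. With those
exponents the monomial spans its weight space (weight spaces are independent and the simple roots
linearly independent), and that weight space is nonzero since no minimal failing independent set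
meets `J_V^c`. Otherwise some later `i_r` is adjacent to `i_t` with `c(i_r) ≥ c(i_t)`; the inner
monomial `w` is then `e_{i_t}`-singular of weight pairing with `α_{i_t}^∨` to at least `c(i_r)`,
so `f_{i_t}^{c(i_t)} w ≠ 0`.
-/

theorem perm_of_sum_map_eq_of_linearIndependent {ι R M : Type*} [Semiring R] [CharZero R]
    [AddCommMonoid M] [Module R M] {v : ι → M} (hv : LinearIndependent R v) {L L' : List ι}
    (h : (L.map v).sum = (L'.map v).sum) : L.Perm L' := by
  classical
  set s := L.toFinset ∪ L'.toFinset
  have hsum : ∀ K : List ι, K.toFinset ⊆ s → (K.map v).sum = ∑ i ∈ s, (K.count i : R) • v i := by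
    intro K hK
    simp_rw [Finset.sum_list_map_count, ← Nat.cast_smul_eq_nsmul R]
    refine Finset.sum_subset hK fun i _ hi => ?_
    rw [List.count_eq_zero_of_not_mem (by simpa using hi), Nat.cast_zero, zero_smul]
  rw [hsum L Finset.subset_union_left, hsum L' Finset.subset_union_right] at h
  refine List.perm_iff_count.mpr fun i => ?_
  by_cases hi : i ∈ s
  · exact_mod_cast linearIndependent_iff'ₛ.mp hv s _ _ h i hi
  · simp only [s, Finset.mem_union, List.mem_toFinset, not_or] at hi
    rw [List.count_eq_zero_of_not_mem hi.1, List.count_eq_zero_of_not_mem hi.2]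

theorem perm_replicate_count_append_filter_ne {α : Type*} (L : List α) (k : α) :
    L.Perm (List.replicate (L.count k) k ++ L.filter (· ≠ k)) := by
  have h := List.filter_append_perm (· = k) L
  rw [List.filter_eq] at h
  simpa using h.symm

theorem mem_drop_ofFn_iff {α : Type*} {n : ℕ} (f : Fin n → α) (s : ℕ) (a : α) :
    a ∈ (List.ofFn f).drop s ↔ ∃ r : Fin n, s ≤ r ∧ f r = a := by
  rw [List.mem_drop_iff_getElem]
  constructor
  · rintro ⟨j, hj, rfl⟩
    rw [List.length_ofFn] at hj
    exact ⟨⟨s + j, by omega⟩, Nat.le_add_right s j, by simp⟩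
  · rintro ⟨r, hr, rfl⟩
    refine ⟨r - s, by simp; omega, ?_⟩
    simp only [List.getElem_ofFn]
    congr
    omega

theorem iSupIndep.eq_of_le_of_iSup_eq_top {α ι : Type*} [CompleteLattice α] [IsModularLattice α]
    {s t : ι → α} (ht : iSupIndep t) (hst : s ≤ t) (hs : ⨆ i, s i = ⊤) (i : ι) : s i = t i := by
  have hdisj : t i ⊓ ⨆ (j) (_ : j ≠ i), s j = ⊥ :=
    ((ht i).mono_right (iSup₂_mono fun j _ => hst j)).eq_bot
  calc s i = s i ⊔ t i ⊓ ⨆ (j) (_ : j ≠ i), s j := by rw [hdisj, sup_bot_eq]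
    _ = (s i ⊔ ⨆ (j) (_ : j ≠ i), s j) ⊓ t i := by rw [inf_comm, sup_inf_assoc_of_le _ (hst i)]
    _ = t i := by rw [← iSup_split_single, hs, top_inf_eq]

section LieModule

variable {R L M : Type*} [CommRing R] [LieRing L] [LieAlgebra R L] [AddCommGroup M] [Module R M]
  [LieRingModule L M] [LieModule R L M]

lemma commute_toEnd_of_lie_eq_zero {x y : L} (h : ⁅x, y⁆ = 0) :
    Commute (LieModule.toEnd R L M x) (LieModule.toEnd R L M y) := by
  refine (commute_iff_eq _ _).mpr (LinearMap.ext fun w => ?_)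
  simp only [Module.End.mul_apply, LieModule.toEnd_apply_apply]
  rw [leibniz_lie, h, zero_lie, zero_add]

variable (L) in
def lieStabilizer (N : Submodule R M) : LieSubalgebra R L where
  carrier := {x | ∀ w ∈ N, ⁅x, w⁆ ∈ N}
  add_mem' hx hy w hw := by rw [add_lie]; exact N.add_mem (hx w hw) (hy w hw)
  zero_mem' w _ := by rw [zero_lie]; exact N.zero_mem
  smul_mem' t x hx w hw := by rw [smul_lie]; exact N.smul_mem t (hx w hw)
  lie_mem' hx hy w hw := by rw [lie_lie]; exact N.sub_mem (hx _ (hy w hw)) (hy _ (hx w hw))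

lemma mem_lieStabilizer_span {S : Set M} {x : L} (hx : ∀ s ∈ S, ⁅x, s⁆ ∈ Submodule.span R S) :
    x ∈ lieStabilizer L (Submodule.span R S) := fun w hw => by
  induction hw using Submodule.span_induction with
  | mem s hs => exact hx s hs
  | zero => rw [lie_zero]; exact Submodule.zero_mem _
  | add u w _ _ hu hw => rw [lie_add]; exact Submodule.add_mem _ hu hw
  | smul t w _ hw => rw [lie_smul]; exact Submodule.smul_mem _ t hw

lemma eq_top_of_lieStabilizer_eq_top {N : Submodule R M} (hN : lieStabilizer L N = ⊤) {v : M}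
    (hv : v ∈ N) (hspan : LieSubmodule.lieSpan R L {v} = ⊤) : N = ⊤ := by
  let N' : LieSubmodule R L M :=
    { toSubmodule := N
      lie_mem := fun {x} {w} hw => (hN ▸ LieSubalgebra.mem_top x : x ∈ lieStabilizer L N) w hw }
  have : LieSubmodule.lieSpan R L {v} ≤ N' :=
    LieSubmodule.lieSpan_le.mpr (Set.singleton_subset_iff.mpr hv)
  rw [hspan, top_le_iff] at this
  exact congrArg LieSubmodule.toSubmodule this

end LieModule

section Words

variable {V : Type} [AddCommGroup V] [LieRingModule g V] (D : Data 𝓘 g)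

def fword (L : List 𝓘) (w : V) : V := L.foldr (fun i u => ⁅D.f i, u⁆) w

@[simp] lemma fword_nil (w : V) : fword D [] w = w := rfl

@[simp] lemma fword_cons (i : 𝓘) (L : List 𝓘) (w : V) :
    fword D (i :: L) w = ⁅D.f i, fword D L w⁆ := rfl

lemma fword_append (L₁ L₂ : List 𝓘) (w : V) :
    fword D (L₁ ++ L₂) w = fword D L₁ (fword D L₂ w) := List.foldr_append

lemma actPow_add (i : 𝓘) (m n : ℕ) (w : V) :
    actPow (D.f i) (m + n) w = actPow (D.f i) m (actPow (D.f i) n w) :=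
  Function.iterate_add_apply _ _ _ _

lemma actPow_succ (i : 𝓘) (m : ℕ) (w : V) :
    actPow (D.f i) (m + 1) w = ⁅D.f i, actPow (D.f i) m w⁆ :=
  Function.iterate_succ_apply' _ _ _

lemma actPow_eq_fword_replicate (i : 𝓘) (m : ℕ) (w : V) :
    actPow (D.f i) m w = fword D (List.replicate m i) w := by
  induction m with
  | zero => rfl
  | succ m ih => rw [actPow_succ, List.replicate_succ, fword_cons, ih]

lemma foldr_actPow_eq_fword (c : 𝓘 → ℕ) (M : List 𝓘) (w : V) :
    M.foldr (fun i u => actPow (D.f i) (c i) u) w =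
      fword D (M.flatMap fun i => List.replicate (c i) i) w := by
  induction M with
  | nil => rfl
  | cons a M ih =>
    rw [List.foldr_cons, ih, List.flatMap_cons, fword_append, actPow_eq_fword_replicate]

lemma lie_e_fword_of_notMem {w : V} {i : 𝓘} (hw : ⁅D.e i, w⁆ = 0) {L : List 𝓘} (hi : i ∉ L) :
    ⁅D.e i, fword D L w⁆ = 0 := by
  induction L with
  | nil => exact hw
  | cons j L ih =>
    rw [List.mem_cons, not_or] at hi
    rw [fword_cons, leibniz_lie, D.lie_e_f_ne i j hi.1, zero_lie, ih hi.2, lie_zero, add_zero]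

variable [Module ℂ V] [LieModule ℂ g V]

lemma fword_eq_of_perm {L L' : List 𝓘} (hLL' : L.Perm L')
    (hcomm : ∀ i ∈ L, ∀ j ∈ L, ⁅D.f i, D.f j⁆ = 0) (w : V) : fword D L w = fword D L' w := by
  have hprod (K : List 𝓘) :
      fword D K w = (K.map fun i => LieModule.toEnd ℂ g V (D.f i)).prod w := by
    induction K with
    | nil => rfl
    | cons i K ih => rw [fword_cons, ih, List.map_cons, List.prod_cons, Module.End.mul_apply,
        LieModule.toEnd_apply_apply]
  rw [hprod, hprod, (hLL'.map _).prod_eq']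
  apply List.pairwise_of_forall_mem_list
  simp only [List.mem_map]
  rintro _ ⟨i, hi, rfl⟩ _ ⟨j, hj, rfl⟩
  exact commute_toEnd_of_lie_eq_zero (hcomm i hi j hj)

lemma lie_f_mem_wtSpace {μ : Module.Dual ℂ D.H} {w : V} (hw : w ∈ wtSpace D.H V μ) (i : 𝓘) :
    ⁅D.f i, w⁆ ∈ wtSpace D.H V (μ - D.α i) := by
  intro h
  rw [leibniz_lie, D.lie_h_f h i, hw h, smul_lie, lie_smul, LinearMap.sub_apply, sub_smul,
    neg_smul]
  abel

lemma fword_mem_wtSpace {μ : Module.Dual ℂ D.H} {w : V} (hw : w ∈ wtSpace D.H V μ)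
    (L : List 𝓘) : fword D L w ∈ wtSpace D.H V (μ - (L.map D.α).sum) := by
  induction L with
  | nil => simpa using hw
  | cons i L ih =>
    rw [fword_cons, List.map_cons, List.sum_cons, add_comm, ← sub_sub]
    exact lie_f_mem_wtSpace D ih i

lemma actPow_mem_wtSpace {μ : Module.Dual ℂ D.H} {w : V} (hw : w ∈ wtSpace D.H V μ)
    (i : 𝓘) (m : ℕ) : actPow (D.f i) m w ∈ wtSpace D.H V (μ - (m : ℂ) • D.α i) := by
  rw [actPow_eq_fword_replicate, Nat.cast_smul_eq_nsmul, ← List.sum_replicate,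
    ← List.map_replicate]
  exact fword_mem_wtSpace D hw _

end Words

section SL2

variable {V : Type} [AddCommGroup V] [Module ℂ V] [LieRingModule g V] [LieModule ℂ g V]
  (D : Data 𝓘 g) {μ : Module.Dual ℂ D.H} {w : V} {i : 𝓘}

lemma Data.α_coroot_self (i : 𝓘) : D.α i (D.coroot i) = 2 := by
  rw [D.pairing_eq, D.A_diag]
  norm_num

lemma lie_e_actPow_succ (hw : w ∈ wtSpace D.H V μ) (he : ⁅D.e i, w⁆ = 0) (m : ℕ) :
    ⁅D.e i, actPow (D.f i) (m + 1) w⁆ =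
      (((m : ℂ) + 1) * (μ (D.coroot i) - m)) • actPow (D.f i) m w := by
  induction m with
  | zero =>
    have h0 : actPow (D.f i) 0 w = w := rfl
    rw [actPow_succ, h0, leibniz_lie, D.lie_e_f_same i, he, lie_zero, add_zero, hw (D.coroot i)]
    simp
  | succ m ih =>
    have hcoroot := actPow_mem_wtSpace D hw i (m + 1) (D.coroot i)
    rw [LinearMap.sub_apply, LinearMap.smul_apply, D.α_coroot_self] at hcoroot
    rw [actPow_succ, leibniz_lie, D.lie_e_f_same i, ih, lie_smul, ← actPow_succ, hcoroot,
      ← add_smul]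
    congr 1
    push_cast
    ring

lemma actPow_ne_zero (hw : w ∈ wtSpace D.H V μ) (he : ⁅D.e i, w⁆ = 0) (hw0 : w ≠ 0) (m : ℕ)
    (hμ : ∀ j : ℕ, j < m → μ (D.coroot i) ≠ j) : actPow (D.f i) m w ≠ 0 := by
  induction m with
  | zero => exact hw0
  | succ m ih =>
    intro h0
    have hcoeff : ((m : ℂ) + 1) * (μ (D.coroot i) - m) ≠ 0 :=
      mul_ne_zero (Nat.cast_add_one_ne_zero m) (sub_ne_zero.mpr (hμ m m.lt_succ_self))
    have h := lie_e_actPow_succ D hw he m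
    rw [h0, lie_zero, eq_comm, smul_eq_zero] at h
    exact ih (fun j hj => hμ j (Nat.lt_succ_of_lt hj)) (h.resolve_left hcoeff)

/-- When `μ(α_i^∨) = N`, the vector `f_i^{N+1} w` is again annihilated by `e_i`, and its weight
pairs negatively with `α_i^∨`, so `f_i` acts injectively from there on. -/
lemma actPow_ne_zero_of_actPow_succ_ne_zero (hw : w ∈ wtSpace D.H V μ) (he : ⁅D.e i, w⁆ = 0)
    {N : ℕ} (hN : μ (D.coroot i) = N) (hw0 : actPow (D.f i) (N + 1) w ≠ 0) {m : ℕ}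
    (hm : N + 1 ≤ m) : actPow (D.f i) m w ≠ 0 := by
  obtain ⟨k, rfl⟩ := Nat.exists_eq_add_of_le' hm
  rw [actPow_add]
  refine actPow_ne_zero D (actPow_mem_wtSpace D hw i (N + 1)) ?_ hw0 k fun j _ => ?_
  · rw [lie_e_actPow_succ D hw he N, hN, sub_self, mul_zero, zero_smul]
  · rw [LinearMap.sub_apply, LinearMap.smul_apply, D.α_coroot_self, hN]
    intro h
    have h_re := congrArg Complex.re h
    norm_num at h_re
    linarith [(j.cast_nonneg : (0 : ℝ) ≤ j)]

end SL2

section HighestWeight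

variable {V : Type} [AddCommGroup V] [Module ℂ V] [LieRingModule g V] [LieModule ℂ g V]
  (D : Data 𝓘 g) {lam : Module.Dual ℂ D.H} {v : V}

lemma iSupIndep_wtSpace {H : LieSubalgebra ℂ g} (hH : ∀ h h' : H, ⁅(h : g), (h' : g)⁆ = 0) :
    iSupIndep (wtSpace H V) := by
  let f : H → Module.End ℂ V := fun h => LieModule.toEnd ℂ g V h
  have hE := Module.End.independent_iInf_maxGenEigenspace_of_forall_mapsTo f fun h h' φ =>
    Module.End.mapsTo_maxGenEigenspace_of_comm (commute_toEnd_of_lie_eq_zero (hH h' h)) φ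
  refine (hE.comp DFunLike.coe_injective).mono fun μ w hw => ?_
  refine Submodule.mem_iInf _ |>.mpr fun h => Module.End.eigenspace_le_maxGenEigenspace ?_
  exact Module.End.mem_eigenspace_iff.mpr (hw h)

lemma span_fword_eq_top (hV : IsHW D V lam v) :
    Submodule.span ℂ (Set.range fun L : List 𝓘 => fword D L v) = ⊤ := by
  obtain ⟨-, hv, he, hspan⟩ := hV
  set N := Submodule.span ℂ (Set.range fun L : List 𝓘 => fword D L v)
  have hH (h : D.H) : (h : g) ∈ lieStabilizer g N := mem_lieStabilizer_span <| by
    rintro _ ⟨L, rfl⟩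
    rw [fword_mem_wtSpace D hv L h]
    exact N.smul_mem _ (Submodule.subset_span ⟨L, rfl⟩)
  have hf (i : 𝓘) : D.f i ∈ lieStabilizer g N := mem_lieStabilizer_span <| by
    rintro _ ⟨L, rfl⟩
    exact Submodule.subset_span ⟨i :: L, rfl⟩
  have he (i : 𝓘) : D.e i ∈ lieStabilizer g N := mem_lieStabilizer_span <| by
    rintro _ ⟨L, rfl⟩
    show ⁅D.e i, fword D L v⁆ ∈ N
    induction L with
    | nil => rw [fword_nil, he i]; exact N.zero_mem
    | cons j L ih =>
      rw [fword_cons, leibniz_lie]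
      refine N.add_mem ?_ (hf j _ ih)
      obtain rfl | hij := eq_or_ne i j
      · rw [D.lie_e_f_same]
        exact hH _ _ (Submodule.subset_span ⟨L, rfl⟩)
      · rw [D.lie_e_f_ne i j hij, zero_lie]
        exact N.zero_mem
  refine eq_top_of_lieStabilizer_eq_top ?_ (Submodule.subset_span ⟨[], rfl⟩) hspan
  rw [eq_top_iff, ← D.generates, LieSubalgebra.lieSpan_le]
  rintro _ ((hx | ⟨i, rfl⟩) | ⟨i, rfl⟩)
  · exact hH ⟨_, hx⟩
  · exact he i
  · exact hf i

/-- Weight spaces are independent and the `f`-words span `V`, so those of weight `μ` span `V_μ`. -/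
lemma exists_fword_ne_zero_of_mem_wtSet (hV : IsHW D V lam v) {μ : Module.Dual ℂ D.H}
    (hμ : μ ∈ wtSet D.H V) : ∃ L : List 𝓘, lam - (L.map D.α).sum = μ ∧ fword D L v ≠ 0 := by
  by_contra! h
  let W (ν : Module.Dual ℂ D.H) : Submodule ℂ V :=
    Submodule.span ℂ {x | ∃ L : List 𝓘, lam - (L.map D.α).sum = ν ∧ fword D L v = x}
  have hle : W ≤ wtSpace D.H V := fun ν => Submodule.span_le.mpr <| by
    rintro _ ⟨L, rfl, rfl⟩
    exact fword_mem_wtSpace D hV.2.1 L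
  have htop : ⨆ ν, W ν = ⊤ := by
    rw [eq_top_iff, ← span_fword_eq_top D hV, Submodule.span_le]
    rintro _ ⟨L, rfl⟩
    exact Submodule.mem_iSup_of_mem _ (Submodule.subset_span ⟨L, rfl, rfl⟩)
  have hWμ : W μ = ⊥ := Submodule.span_eq_bot.mpr fun _ ⟨L, hL, hx⟩ => hx ▸ h L hL
  exact hμ (iSupIndep.eq_of_le_of_iSup_eq_top (iSupIndep_wtSpace D.cartan_abelian) hle htop μ ▸ hWμ)

end HighestWeight

section Independent

variable {V : Type} [AddCommGroup V] [Module ℂ V] [LieRingModule g V] [LieModule ℂ g V]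
  (D : Data 𝓘 g) {lam : Module.Dual ℂ D.H} {v : V} {S : Set 𝓘}

lemma lie_f_f_eq_zero_of_α_coroot_eq_zero {i j : 𝓘} (hij : i ≠ j)
    (h : D.α i (D.coroot j) = 0) : ⁅D.f j, D.f i⁆ = 0 := by
  have hA : D.A j i = 0 := by exact_mod_cast (D.pairing_eq i j).symm.trans h
  simpa [hA] using D.serre_f j i hij.symm

lemma fword_eq_of_perm_of_indep (hS : IndepSet D S) {L L' : List 𝓘} (hL : ∀ i ∈ L, i ∈ S)
    (hLL' : L.Perm L') (w : V) : fword D L w = fword D L' w := by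
  refine fword_eq_of_perm D hLL' (fun i hi j hj => ?_) w
  obtain rfl | hij := eq_or_ne i j
  · exact lie_self _
  · exact lie_f_f_eq_zero_of_α_coroot_eq_zero D hij.symm (hS j (hL j hj) i (hL i hi) hij.symm)

lemma IsHW.mem_wtSet (hV : IsHW D V lam v) : lam ∈ wtSet D.H V := fun h =>
  hV.1 ((Submodule.mem_bot ℂ).mp (h ▸ hV.2.1))

/-- A failing `T` would be a minimal failing independent set, putting its elements in `J_V`. -/
lemma sub_sum_mem_wtSet_of_indep (hlam : lam ∈ wtSet D.H V) (hS : IndepSet D S)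
    (hSJ : S ⊆ Jlam D lam) (hSV : ∀ i ∈ S, i ∉ JV D V lam) (T : Finset 𝓘) (hTS : ↑T ⊆ S) :
    lam - ∑ k ∈ T, (lam (D.coroot k) + 1) • D.α k ∈ wtSet D.H V := by
  induction T using Finset.strongInduction with
  | H T ih =>
    by_contra hT
    obtain rfl | ⟨i, hi⟩ := T.eq_empty_or_nonempty
    · exact hT (by simpa using hlam)
    · refine hSV i (hTS hi) ⟨T, hTS.trans hSJ, fun a ha b hb => hS a (hTS ha) b (hTS hb), hT,
        fun K hK => ih K hK ((Finset.coe_subset.mpr hK.subset).trans hTS), hi⟩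

lemma fword_ne_zero_of_forall_count_eq (hV : IsHW D V lam v) (hS : IndepSet D S)
    (hSJ : S ⊆ Jlam D lam) (hSV : ∀ i ∈ S, i ∉ JV D V lam) {L : List 𝓘} (hL : ∀ i ∈ L, i ∈ S)
    (hcount : ∀ k ∈ L, (L.count k : ℂ) = lam (D.coroot k) + 1) : fword D L v ≠ 0 := by
  have hsum : (L.map D.α).sum = ∑ k ∈ L.toFinset, (lam (D.coroot k) + 1) • D.α k := by
    rw [Finset.sum_list_map_count]
    refine Finset.sum_congr rfl fun k hk => ?_
    rw [← Nat.cast_smul_eq_nsmul ℂ, hcount k (List.mem_toFinset.mp hk)]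
  have hwt := sub_sum_mem_wtSet_of_indep D (hV.mem_wtSet D) hS hSJ hSV L.toFinset
    fun i hi => hL i (List.mem_toFinset.mp hi)
  rw [← hsum] at hwt
  obtain ⟨L', hL', hne⟩ := exists_fword_ne_zero_of_mem_wtSet D hV hwt
  have hperm : L'.Perm L :=
    perm_of_sum_map_eq_of_linearIndependent D.indepSimple (sub_right_injective hL')
  rwa [fword_eq_of_perm_of_indep D hS (fun i hi => hL i (hperm.subset hi)) hperm] at hne

lemma fword_eq_actPow_fword_filter (hS : IndepSet D S) {L : List 𝓘} (hL : ∀ i ∈ L, i ∈ S)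
    (k : 𝓘) (w : V) :
    fword D L w = actPow (D.f k) (L.count k) (fword D (L.filter (· ≠ k)) w) := by
  rw [actPow_eq_fword_replicate, ← fword_append]
  exact fword_eq_of_perm_of_indep D hS hL (perm_replicate_count_append_filter_ne L k) w

lemma sum_map_α_apply_coroot_eq_zero (hS : IndepSet D S) {L : List 𝓘} (hL : ∀ i ∈ L, i ∈ S)
    {k : 𝓘} (hk : k ∈ S) (hkL : k ∉ L) : (L.map D.α).sum (D.coroot k) = 0 := by
  induction L with
  | nil => simp
  | cons i L ih =>
    simp only [List.mem_cons, not_or, forall_eq_or_imp] at hkL hL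
    rw [List.map_cons, List.sum_cons, LinearMap.add_apply, ih hL.2 hkL.2,
      hS i hL.1 k hk (Ne.symm hkL.1), add_zero]

lemma fword_ne_zero_of_indep (hV : IsHW D V lam v) (hS : IndepSet D S)
    (hSJ : S ⊆ Jlam D lam) (hSV : ∀ i ∈ S, i ∉ JV D V lam) (L : List 𝓘) (hL : ∀ i ∈ L, i ∈ S) :
    fword D L v ≠ 0 := by
  induction hn : L.length using Nat.strong_induction_on generalizing L with
  | _ n ih =>
  by_cases hcount : ∀ k ∈ L, (L.count k : ℂ) = lam (D.coroot k) + 1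
  · exact fword_ne_zero_of_forall_count_eq D hV hS hSJ hSV hL hcount
  push Not at hcount
  obtain ⟨k, hkL, hk⟩ := hcount
  obtain ⟨N, hN⟩ := hSJ (hL k hkL)
  set L' := L.filter (· ≠ k)
  have hL' : ∀ i ∈ L', i ∈ S := fun i hi => hL i (List.mem_of_mem_filter hi)
  have hkL' : k ∉ L' := by simp [L']
  have hlen : L.count k + L'.length = n := by
    rw [← hn, (perm_replicate_count_append_filter_ne L k).length_eq, List.length_append,
      List.length_replicate]
  have hw := fword_mem_wtSpace D hV.2.1 L'
  have hwk : (lam - (L'.map D.α).sum) (D.coroot k) = N := by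
    rw [LinearMap.sub_apply, sum_map_α_apply_coroot_eq_zero D hS hL' (hL k hkL) hkL', sub_zero, hN]
  have he := lie_e_fword_of_notMem D (hV.2.2.1 k) hkL'
  have hpos : 0 < L.count k := List.count_pos_iff.mpr hkL
  have hkN : L.count k ≠ N + 1 := fun h => hk (by rw [h, hN]; push_cast; rfl)
  rw [fword_eq_actPow_fword_filter D hS hL k]
  rcases le_or_gt (L.count k) N with hle | hlt
  · refine actPow_ne_zero D hw he (ih _ (by omega) L' hL' rfl) _ fun j hj => ?_
    rw [hwk]
    exact_mod_cast (by omega : N ≠ j)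
  · refine actPow_ne_zero_of_actPow_succ_ne_zero D hw he hwk ?_ (by omega : N + 1 ≤ L.count k)
    rw [actPow_eq_fword_replicate, ← fword_append]
    refine ih _ ?_ _ ?_ rfl
    · rw [List.length_append, List.length_replicate]
      omega
    · simp only [List.mem_append, List.mem_replicate]
      rintro i (⟨-, rfl⟩ | hi)
      exacts [hL i hkL, hL' i hi]

end Independent

section Monomials

variable {V : Type} [AddCommGroup V] [Module ℂ V] [LieRingModule g V] [LieModule ℂ g V]
  (D : Data 𝓘 g) {lam : Module.Dual ℂ D.H} {v : V} (c : 𝓘 → ℕ)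

lemma foldr_actPow_mem_wtSpace {μ : Module.Dual ℂ D.H} {w : V} (hw : w ∈ wtSpace D.H V μ)
    (M : List 𝓘) : M.foldr (fun i u => actPow (D.f i) (c i) u) w ∈
      wtSpace D.H V (μ - (M.map fun i => (c i : ℂ) • D.α i).sum) := by
  induction M with
  | nil => simpa using hw
  | cons a M ih =>
    rw [List.foldr_cons, List.map_cons, List.sum_cons, add_comm, ← sub_sub]
    exact actPow_mem_wtSpace D ih a (c a)

lemma sum_map_smul_α_apply_coroot (M : List 𝓘) (a : 𝓘) :
    (M.map fun i => (c i : ℂ) • D.α i).sum (D.coroot a) =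
      ((M.map fun i => (c i : ℤ) * D.A a i).sum : ℤ) := by
  induction M with
  | nil => simp
  | cons i M ih => simp [ih, D.pairing_eq]

lemma le_neg_sum_map_mul_A {M : List 𝓘} {a b : 𝓘} (haM : a ∉ M) (hb : b ∈ M)
    (hab : D.α a (D.coroot b) ≠ 0) : (c b : ℤ) ≤ -(M.map fun i => (c i : ℤ) * D.A a i).sum := by
  have hA : D.A a b ≤ -1 := by
    have hne : D.A a b ≠ 0 := fun h => hab (by rw [D.pairing_eq, (D.A_zero_iff a b).mp h]; simp)
    have := D.A_offdiag a b (fun h => haM (h ▸ hb))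
    omega
  have hnonneg : ∀ x ∈ M.map fun i => -((c i : ℤ) * D.A a i), 0 ≤ x := by
    simp only [List.mem_map]
    rintro _ ⟨i, hi, rfl⟩
    have := D.A_offdiag a i (fun h => haM (h ▸ hi))
    nlinarith [(c i).cast_nonneg (α := ℤ)]
  have hcb : (c b : ℤ) ≤ -((c b : ℤ) * D.A a b) := by nlinarith [(c b).cast_nonneg (α := ℤ)]
  rw [List.sum_neg, List.map_map]
  exact hcb.trans (List.single_le_sum hnonneg _ (List.mem_map_of_mem hb))

/-- The weight of the inner monomial pairs with `α_a^∨` to at least `c b`, which is `≥ c a`. -/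
lemma actPow_foldr_ne_zero_of_α_coroot_ne_zero (hv : v ∈ wtSpace D.H V lam)
    (he : ∀ i, ⁅D.e i, v⁆ = 0) {a b : 𝓘} {N : ℕ} (hN : lam (D.coroot a) = N) {M : List 𝓘}
    (haM : a ∉ M) (hM : M.foldr (fun i u => actPow (D.f i) (c i) u) v ≠ 0) (hb : b ∈ M)
    (hab : D.α a (D.coroot b) ≠ 0) (hc : c a ≤ c b) :
    actPow (D.f a) (c a) (M.foldr (fun i u => actPow (D.f i) (c i) u) v) ≠ 0 := by
  have hea : ⁅D.e a, M.foldr (fun i u => actPow (D.f i) (c i) u) v⁆ = 0 := by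
    rw [foldr_actPow_eq_fword]
    refine lie_e_fword_of_notMem D (he a) fun h => haM ?_
    obtain ⟨i, hi, hai⟩ := List.mem_flatMap.mp h
    exact (List.eq_of_mem_replicate hai) ▸ hi
  have hbound := le_neg_sum_map_mul_A D c haM hb hab
  refine actPow_ne_zero D (foldr_actPow_mem_wtSpace D c hv M) hea hM _ fun j hj h => ?_
  rw [LinearMap.sub_apply, hN, sum_map_smul_α_apply_coroot] at h
  have hz : (((N : ℤ) - (M.map fun i => (c i : ℤ) * D.A a i).sum : ℤ) : ℂ) = ((j : ℤ) : ℂ) := by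
    rwa [Int.cast_sub, Int.cast_natCast, Int.cast_natCast]
  have := Int.cast_injective hz
  omega

lemma foldr_actPow_ne_zero (hV : IsHW D V lam v) (hP : ∀ i : 𝓘, ∃ k : ℕ, lam (D.coroot i) = k)
    (M : List 𝓘) (hM : M.Nodup) (hMV : ∀ j ∈ M, j ∉ JV D V lam)
    (henum : ∀ t (ht : t < M.length), IndepSet D {j | j ∈ M.drop t} ∨
      ∃ b ∈ M.drop (t + 1), D.α M[t] (D.coroot b) ≠ 0 ∧ c M[t] ≤ c b) :
    M.foldr (fun i u => actPow (D.f i) (c i) u) v ≠ 0 := by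
  induction M with
  | nil => exact hV.1
  | cons a M ih =>
    rcases henum 0 (List.length_pos_of_mem List.mem_cons_self) with hind | ⟨b, hb, hab, hc⟩
    · rw [foldr_actPow_eq_fword]
      refine fword_ne_zero_of_indep D hV hind (fun i _ => hP i) hMV _ fun i hi => ?_
      obtain ⟨j, hj, hij⟩ := List.mem_flatMap.mp hi
      exact (List.eq_of_mem_replicate hij) ▸ hj
    · obtain ⟨N, hN⟩ := hP a
      have hM' := ih (List.nodup_cons.mp hM).2 (fun j hj => hMV j (List.mem_cons_of_mem a hj))
        fun t ht => henum (t + 1) (Nat.succ_lt_succ ht)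
      exact actPow_foldr_ne_zero_of_α_coroot_ne_zero D c hV.2.1 hV.2.2.1 hN
        (List.nodup_cons.mp hM).1 hM' hb hab hc

end Monomials

theorem free_direction_monomial_nonvanishing_general
    {𝓘 : Type} {g : Type} [LieRing g] [LieAlgebra ℂ g]
    (D : Data 𝓘 g)
    (V : Type) [AddCommGroup V] [Module ℂ V] [LieRingModule g V] [LieModule ℂ g V]
    (lam : Module.Dual ℂ D.H) (v : V) (hV : IsHW D V lam v)
    (hP : ∀ i : 𝓘, ∃ k : ℕ, lam (D.coroot i) = (k : ℂ))
    (n : ℕ) (idx : Fin n → 𝓘) (hinj : Function.Injective idx)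
    (hrange : ∀ j : 𝓘, (∃ t : Fin n, idx t = j) ↔ j ∉ JV D V lam)
    (c : 𝓘 → ℕ)
    (henum : ∀ t : Fin n,
      IndepSet D {j | ∃ r : Fin n, t ≤ r ∧ idx r = j} ∨
        ∃ r : Fin n, t < r ∧ D.α (idx t) (D.coroot (idx r)) ≠ 0 ∧ c (idx t) ≤ c (idx r)) :
    (List.ofFn idx).foldr (fun i w => actPow (D.f i) (c i) w) v ≠ 0 := by
  refine foldr_actPow_ne_zero D c hV hP _ (List.nodup_ofFn.mpr hinj)
    (fun j hj => (hrange j).mp (List.mem_ofFn.mp hj)) fun t ht => ?_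
  rw [List.length_ofFn] at ht
  rcases henum ⟨t, ht⟩ with hind | ⟨r, htr, hab, hc⟩
  · left
    simpa [mem_drop_ofFn_iff, Fin.le_def] using hind
  · right
    refine ⟨idx r, (mem_drop_ofFn_iff idx _ _).mpr ⟨r, htr, rfl⟩, ?_, ?_⟩ <;> simpa

/-- Proposition 1.13(a), via Algorithm 1.12: let `λ ∈ P⁺` and let
`V` be a highest weight module with `J_V^c ≠ ∅`, `|J_V^c| = n`.  Fix `c(i) ∈ ℤ≥0` for
`i ∈ J_V^c`, and an enumeration `i_1, …, i_n` of `J_V^c` such that for each `t`, either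
`{i_t, …, i_n}` is independent, or there is `r > t` with `⟨α_{i_t}, α_{i_r}^∨⟩ ≠ 0` and
`c(i_r) ≥ c(i_t)`.  Then `f_{i_1}^{c(i_1)} ⋯ f_{i_n}^{c(i_n)} · v_λ ≠ 0`. -/
theorem free_direction_monomial_nonvanishing
    {𝓘 : Type} [Fintype 𝓘] [DecidableEq 𝓘] {g : Type} [LieRing g] [LieAlgebra ℂ g]
    (D : Data 𝓘 g)
    (V : Type) [AddCommGroup V] [Module ℂ V] [LieRingModule g V] [LieModule ℂ g V]
    (lam : Module.Dual ℂ D.H) (v : V) (hV : IsHW D V lam v)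
    (hP : ∀ i : 𝓘, ∃ k : ℕ, lam (D.coroot i) = (k : ℂ))
    (n : ℕ) (hn : 0 < n) (idx : Fin n → 𝓘) (hinj : Function.Injective idx)
    (hrange : ∀ j : 𝓘, (∃ t : Fin n, idx t = j) ↔ j ∉ JV D V lam)
    (c : 𝓘 → ℕ)
    (henum : ∀ t : Fin n,
      IndepSet D {j | ∃ r : Fin n, t ≤ r ∧ idx r = j} ∨
        ∃ r : Fin n, t < r ∧ D.α (idx t) (D.coroot (idx r)) ≠ 0 ∧ c (idx t) ≤ c (idx r)) :
    (List.ofFn idx).foldr (fun i w => actPow (D.f i) (c i) w) v ≠ 0 :=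
  free_direction_monomial_nonvanishing_general D V lam v hV hP n idx hinj hrange c henum

end KM
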